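/- The MCRE operator Ẑ^π defined by (Ẑ^π Q)(s,a) = (1-υ)(T̂^π Q)(s,a) + υ(Ĥ^π Q)(s,a) - γ I^π(s,a) satisfies ‖Ẑ^π Q₁ - Ẑ^π Q₂‖_∞ ≤ (γ + υγ - υγ²) ‖Q₁ - Q₂‖_∞, and since γ + υγ - υγ² < 1, Ẑ^π is a contraction and possesses a unique fixed point. -/

import Mathlib

/-- The empirical Bellman operator. -/
def TBell {S A : Type*} [Fintype S] (P : S → A → S → ℝ) (r : S → A → ℝ) (γ : ℝ)
    (π : S → A) (Q : S → A → ℝ) : S → A → ℝ :=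
  fun s a => r s a + γ * ∑ s', P s a s' * Q s' (π s')

/-- The empirical TD Bellman operator. -/
def Hop {S A : Type*} [Fintype S] (P : S → A → S → ℝ) (r : S → A → ℝ) (γ : ℝ)
    (π : S → A) (Q : S → A → ℝ) : S → A → ℝ :=
  fun s a => r s a + γ * ∑ s', P s a s' *
    (Q s' (π s') - (r s a + γ * Q s' (π s') - Q s (π s)))

/-- The MCRE operator. -/
def Zop {S A : Type*} [Fintype S] (P : S → A → S → ℝ) (r : S → A → ℝ) (γ υ : ℝ)
    (I : S → A → ℝ) (π : S → A) (Q : S → A → ℝ) : S → A → ℝ :=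
  fun s a => (1 - υ) * TBell P r γ π Q s a + υ * Hop P r γ π Q s a - γ * I s a

/-!
Averaging the TD error against `P̂` leaves `Ĥ^π Q = (1 - γ) r + γ(1 - γ) P^π Q + γ Q(s, π s)`,
so `Ẑ^π` is an affine map whose linear part `Q ↦ γ(1 - υγ) P^π Q + υγ Q(·, π ·)` has nonnegative
coefficients. A stochastic average is `1`-Lipschitz in sup norm, so `Ẑ^π` is Lipschitz with
constant `γ(1 - υγ) + υγ = γ + υγ - υγ²`, and `1 - (γ + υγ - υγ²) = (1 - γ)(1 - υγ) > 0`.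
Banach's fixed point theorem finishes the proof.
-/

open Finset

/-- `(P^π Q)(s, a) = 𝔼_{s' ∼ P̂(·|s,a)} Q(s', π s')`. -/
def nextValue {S A : Type*} [Fintype S] (P : S → A → S → ℝ) (π : S → A) (Q : S → A → ℝ)
    (s : S) (a : A) : ℝ :=
  ∑ s', P s a s' * Q s' (π s')

lemma abs_sum_mul_le_of_abs_le {ι : Type*} [Fintype ι] {w f : ι → ℝ} {C : ℝ}
    (hw0 : ∀ i, 0 ≤ w i) (hw1 : ∑ i, w i = 1) (hf : ∀ i, |f i| ≤ C) :
    |∑ i, w i * f i| ≤ C := by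
  have hmem := (convex_closedBall (0 : ℝ) C).sum_mem (t := univ) (fun i _ => hw0 i) hw1
    (fun i _ => show f i ∈ Metric.closedBall 0 C by simpa using hf i)
  simpa using hmem

lemma dist_apply_apply_le {S A : Type*} [Fintype S] [Fintype A] (Q₁ Q₂ : S → A → ℝ)
    (s : S) (a : A) : dist (Q₁ s a) (Q₂ s a) ≤ dist Q₁ Q₂ :=
  (dist_le_pi_dist (Q₁ s) (Q₂ s) a).trans (dist_le_pi_dist Q₁ Q₂ s)

section Stochastic

variable {S A : Type*} [Fintype S] {P : S → A → S → ℝ}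

lemma abs_nextValue_sub_le [Fintype A] (hP0 : ∀ s a s', 0 ≤ P s a s')
    (hP1 : ∀ s a, ∑ s', P s a s' = 1) (π : S → A) (Q₁ Q₂ : S → A → ℝ) (s : S) (a : A) :
    |nextValue P π Q₁ s a - nextValue P π Q₂ s a| ≤ dist Q₁ Q₂ := by
  rw [nextValue, nextValue, ← sum_sub_distrib]
  simp_rw [← mul_sub]
  exact abs_sum_mul_le_of_abs_le (hP0 s a) (hP1 s a) fun s' =>
    (dist_apply_apply_le Q₁ Q₂ s' (π s')).trans_eq' (Real.dist_eq _ _).symm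

lemma Zop_apply (hP1 : ∀ s a, ∑ s', P s a s' = 1) (r : S → A → ℝ) (γ υ : ℝ)
    (I : S → A → ℝ) (π : S → A) (Q : S → A → ℝ) (s : S) (a : A) :
    Zop P r γ υ I π Q s a = (1 - υ * γ) * r s a - γ * I s a
      + γ * (1 - υ * γ) * nextValue P π Q s a + υ * γ * Q s (π s) := by
  have hTD : ∑ s', P s a s' * (Q s' (π s') - (r s a + γ * Q s' (π s') - Q s (π s)))
      = (1 - γ) * nextValue P π Q s a - r s a + Q s (π s) := by
    simp only [nextValue, mul_sub, mul_add, sum_sub_distrib, sum_add_distrib, ← sum_mul,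
      hP1, mul_left_comm _ γ, ← mul_sum]
    ring
  simp only [Zop, TBell, Hop, hTD, nextValue]
  ring

end Stochastic

lemma mcre_modulus_nonneg {γ υ : ℝ} (hγ0 : 0 ≤ γ) (hγ1 : γ ≤ 1) (hυ0 : 0 ≤ υ) :
    0 ≤ γ + υ * γ - υ * γ ^ 2 := by
  nlinarith [mul_nonneg hυ0 (mul_nonneg hγ0 (sub_nonneg.2 hγ1))]

lemma mcre_modulus_lt_one {γ υ : ℝ} (hγ0 : 0 ≤ γ) (hγ1 : γ < 1) (hυ1 : υ ≤ 1) :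
    γ + υ * γ - υ * γ ^ 2 < 1 := by
  nlinarith [mul_pos (sub_pos.2 hγ1) (sub_pos.2 (mul_lt_one_of_nonneg_of_lt_one_right hυ1 hγ0 hγ1))]

lemma dist_Zop_le {S A : Type*} [Fintype S] [Fintype A] {P : S → A → S → ℝ}
    (hP0 : ∀ s a s', 0 ≤ P s a s') (hP1 : ∀ s a, ∑ s', P s a s' = 1)
    (r : S → A → ℝ) {γ υ : ℝ} (hγ0 : 0 ≤ γ) (hγ1 : γ < 1) (hυ0 : 0 ≤ υ) (hυ1 : υ ≤ 1)
    (I : S → A → ℝ) (π : S → A) (Q₁ Q₂ : S → A → ℝ) :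
    dist (Zop P r γ υ I π Q₁) (Zop P r γ υ I π Q₂) ≤ (γ + υ * γ - υ * γ ^ 2) * dist Q₁ Q₂ := by
  have hυγ : 0 ≤ 1 - υ * γ := (sub_pos.2 (mul_lt_one_of_nonneg_of_lt_one_right hυ1 hγ0 hγ1)).le
  have hK : 0 ≤ (γ + υ * γ - υ * γ ^ 2) * dist Q₁ Q₂ :=
    mul_nonneg (mcre_modulus_nonneg hγ0 hγ1.le hυ0) dist_nonneg
  refine (dist_pi_le_iff hK).2 fun s => (dist_pi_le_iff hK).2 fun a => ?_
  have hdiff : Zop P r γ υ I π Q₁ s a - Zop P r γ υ I π Q₂ s a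
      = γ * (1 - υ * γ) * (nextValue P π Q₁ s a - nextValue P π Q₂ s a)
        + υ * γ * (Q₁ s (π s) - Q₂ s (π s)) := by
    rw [Zop_apply hP1, Zop_apply hP1]
    ring
  have hnext := abs_nextValue_sub_le hP0 hP1 π Q₁ Q₂ s a
  have hcur : |Q₁ s (π s) - Q₂ s (π s)| ≤ dist Q₁ Q₂ :=
    (dist_apply_apply_le Q₁ Q₂ s (π s)).trans_eq' (Real.dist_eq _ _).symm
  calc dist (Zop P r γ υ I π Q₁ s a) (Zop P r γ υ I π Q₂ s a)
      ≤ γ * (1 - υ * γ) * |nextValue P π Q₁ s a - nextValue P π Q₂ s a|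
        + υ * γ * |Q₁ s (π s) - Q₂ s (π s)| := by
        rw [Real.dist_eq, hdiff]
        refine (abs_add_le _ _).trans_eq ?_
        rw [abs_mul (γ * _), abs_mul (υ * γ), abs_of_nonneg (mul_nonneg hγ0 hυγ),
          abs_of_nonneg (mul_nonneg hυ0 hγ0)]
    _ ≤ γ * (1 - υ * γ) * dist Q₁ Q₂ + υ * γ * dist Q₁ Q₂ := by gcongr
    _ = (γ + υ * γ - υ * γ ^ 2) * dist Q₁ Q₂ := by ring

theorem Zop_contraction_unique_fixedPoint_general
    {S A : Type*} [Fintype S] [Fintype A]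
    (P : S → A → S → ℝ) (hP0 : ∀ s a s', 0 ≤ P s a s')
    (hP1 : ∀ s a, ∑ s', P s a s' = 1)
    (r : S → A → ℝ) (γ υ : ℝ) (hγ0 : 0 ≤ γ) (hγ1 : γ < 1)
    (hυ0 : 0 ≤ υ) (hυ1 : υ ≤ 1) (I : S → A → ℝ) (π : S → A) :
    (∀ Q₁ Q₂ : S → A → ℝ,
      dist (Zop P r γ υ I π Q₁) (Zop P r γ υ I π Q₂) ≤ (γ + υ * γ - υ * γ ^ 2) * dist Q₁ Q₂) ∧
    ∃! Qstar : S → A → ℝ, Zop P r γ υ I π Qstar = Qstar := by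
  have hLip := dist_Zop_le hP0 hP1 r hγ0 hγ1 hυ0 hυ1 I π
  refine ⟨hLip, ?_⟩
  have hZ : ContractingWith ⟨_, mcre_modulus_nonneg hγ0 hγ1.le hυ0⟩ (Zop P r γ υ I π) :=
    ⟨mcre_modulus_lt_one hγ0 hγ1 hυ1, LipschitzWith.of_dist_le_mul hLip⟩
  exact ⟨_, hZ.fixedPoint_isFixedPt, fun _ hQ => hZ.fixedPoint_unique hQ⟩

/-- The MCRE operator is a `(γ + υγ - υγ²)`-contraction in sup norm, hence has a
unique fixed point. -/
theorem Zop_contraction_unique_fixedPoint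
    {S A : Type*} [Fintype S] [Fintype A] [Nonempty S] [Nonempty A]
    (P : S → A → S → ℝ) (hP0 : ∀ s a s', 0 ≤ P s a s')
    (hP1 : ∀ s a, ∑ s', P s a s' = 1)
    (r : S → A → ℝ) (γ υ : ℝ) (hγ0 : 0 ≤ γ) (hγ1 : γ < 1)
    (hυ0 : 0 ≤ υ) (hυ1 : υ ≤ 1) (I : S → A → ℝ) (π : S → A) :
    (∀ Q₁ Q₂ : S → A → ℝ,
      dist (Zop P r γ υ I π Q₁) (Zop P r γ υ I π Q₂) ≤ (γ + υ * γ - υ * γ ^ 2) * dist Q₁ Q₂) ∧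
    ∃! Qstar : S → A → ℝ, Zop P r γ υ I π Qstar = Qstar :=
  Zop_contraction_unique_fixedPoint_general P hP0 hP1 r γ υ hγ0 hγ1 hυ0 hυ1 I π
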